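/- If H is a strongly primary monoid with Λ(H) < ∞, then H is locally tame but not globally tame. -/

import Mathlib

open Pointwise

section MonoidDefs

variable {G : Type*} [CommGroup G]

/-- `x` is a unit of the submonoid `H`. -/
def IsHUnit (H : Submonoid G) (x : G) : Prop := x ∈ H ∧ x⁻¹ ∈ H

/-- The set of non-units of `H`. -/
def nonUnits (H : Submonoid G) : Set G := {x | x ∈ H ∧ x⁻¹ ∉ H}

/-- `u` is an atom (irreducible element) of `H`. -/
def IsHAtom (H : Submonoid G) (u : G) : Prop :=
  u ∈ H ∧ ¬ IsHUnit H u ∧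
    ∀ a b : G, a ∈ H → b ∈ H → u = a * b → IsHUnit H a ∨ IsHUnit H b

/-- `G` is the quotient group of `H`. -/
def IsQuotientGroup (H : Submonoid G) : Prop :=
  ∀ g : G, ∃ a ∈ H, ∃ b ∈ H, g = a / b

/-- `H` is a primary monoid. -/
def IsPrimaryMonoid (H : Submonoid G) : Prop :=
  (nonUnits H).Nonempty ∧
    ∀ a ∈ nonUnits H, ∀ b ∈ nonUnits H, ∃ n : ℕ, 0 < n ∧ b ^ n ∈ a • (H : Set G)

/-- `H` is a strongly primary monoid. -/
def IsStronglyPrimary (H : Submonoid G) : Prop :=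
  (nonUnits H).Nonempty ∧
    ∀ a ∈ nonUnits H, ∃ n : ℕ, 0 < n ∧ nonUnits H ^ n ⊆ a • (H : Set G)

/-- `x` and `y` are associated in `H`. -/
def HAssoc (H : Submonoid G) (x y : G) : Prop := IsHUnit H (x / y)

/-- The set of lengths of `a`: all `k` such that `a` is a product of `k` atoms
(up to a unit of `H`). -/
def lengthSet (H : Submonoid G) (a : G) : Set ℕ :=
  {k | ∃ s : Multiset G, Multiset.card s = k ∧ (∀ v ∈ s, IsHAtom H v) ∧ HAssoc H a s.prod}

/-- `Λ(S)`, the supremum of the minimal factorization lengths of elements of `S`. -/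
noncomputable def Lambda (H : Submonoid G) (S : Set G) : ℕ∞ :=
  ⨆ (a : G) (_ : a ∈ S) (_ : (lengthSet H a).Nonempty), ((sInf (lengthSet H a) : ℕ) : ℕ∞)

/-- `ρ_k(H)`, the supremum of `sup L(a)` over all `a` with `k ∈ L(a)`. -/
noncomputable def rho (H : Submonoid G) (k : ℕ∞) : ℕ∞ :=
  ⨆ (a : G) (_ : a ∈ H) (_ : ∃ n ∈ lengthSet H a, (n : ℕ∞) = k),
    ⨆ (n : ℕ) (_ : n ∈ lengthSet H a), (n : ℕ∞)

/-- The elasticity `ρ(H) = sup { m/n : m, n ∈ L(a), a ∈ H }`. -/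
noncomputable def elasticity (H : Submonoid G) : ENNReal :=
  ⨆ (a : G) (_ : a ∈ H) (m : ℕ) (_ : m ∈ lengthSet H a) (n : ℕ) (_ : n ∈ lengthSet H a),
    (m : ENNReal) / (n : ENNReal)

/-- `z` is a factorization of `a`: a multiset of atoms whose product is associated to `a`. -/
def IsFactorization (H : Submonoid G) (a : G) (z : Multiset G) : Prop :=
  (∀ v ∈ z, IsHAtom H v) ∧ HAssoc H a z.prod

/-- The distance between two factorizations: cancel a (maximal) common part (up to
associates) and take the maximum of the lengths of the remaining parts. -/
noncomputable def fdist (H : Submonoid G) (z z' : Multiset G) : ℕ :=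
  sInf {N : ℕ | ∃ x x' v w : Multiset G, z = x + v ∧ z' = x' + w ∧
    Multiset.Rel (HAssoc H) x x' ∧ max (Multiset.card v) (Multiset.card w) ≤ N}

/-- `N` is a tame bound for the atom `u`: for every multiple `a` of `u` and every
factorization `z` of `a` there is a factorization `z'` of `a` containing `u`
with `d(z, z') ≤ N`. -/
def TameBound (H : Submonoid G) (u : G) (N : ℕ) : Prop :=
  ∀ a ∈ H, (∃ b ∈ H, a = u * b) → ∀ z : Multiset G, IsFactorization H a z →
    ∃ z' : Multiset G, IsFactorization H a z' ∧ (∃ v ∈ z', HAssoc H v u) ∧ fdist H z z' ≤ N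

/-- `H` is locally tame: `t(u) < ∞` for every atom `u`. -/
def LocallyTame (H : Submonoid G) : Prop :=
  ∀ u : G, IsHAtom H u → ∃ N : ℕ, TameBound H u N

/-- `H` is globally tame: `sup { t(u) : u an atom } < ∞`. -/
def GloballyTame (H : Submonoid G) : Prop :=
  ∃ N : ℕ, ∀ u : G, IsHAtom H u → TameBound H u N

/-- The local tame degree `t(u)` of `u`. -/
noncomputable def tameDeg (H : Submonoid G) (u : G) : ℕ∞ :=
  sInf {N : ℕ∞ | ∃ n : ℕ, TameBound H u n ∧ N = (n : ℕ∞)}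

/-- `N` is an omega bound for `a`: whenever `a` divides a product of elements of `H`,
it divides a subproduct with at most `N` factors. -/
def OmegaBound (H : Submonoid G) (a : G) (N : ℕ) : Prop :=
  ∀ s : Multiset G, (∀ x ∈ s, x ∈ H) → (∃ c ∈ H, s.prod = a * c) →
    ∃ t : Multiset G, t ≤ s ∧ Multiset.card t ≤ N ∧ ∃ c ∈ H, t.prod = a * c

/-- The omega invariant `ω(a)`. -/
noncomputable def omegaDeg (H : Submonoid G) (a : G) : ℕ∞ :=
  sInf {N : ℕ∞ | ∃ n : ℕ, OmegaBound H a n ∧ N = (n : ℕ∞)}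

/-- `M(x)`: the smallest `n ≥ 1` with `mⁿ ⊆ xH`. -/
noncomputable def Mdeg (H : Submonoid G) (x : G) : ℕ :=
  sInf {n : ℕ | 0 < n ∧ nonUnits H ^ n ⊆ x • (H : Set G)}

/-- The complete integral closure `Ĥ` of `H` (inside the quotient group). -/
def hatH (H : Submonoid G) : Set G := {x | ∃ c ∈ H, ∀ n : ℕ, c * x ^ n ∈ H}

/-- The set of non-units of `Ĥ`. -/
def hatNonUnits (H : Submonoid G) : Set G := {x | x ∈ hatH H ∧ x⁻¹ ∉ hatH H}

/-- The root closure `H̃` of `H`. -/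
def tildeH (H : Submonoid G) : Set G := {x | ∃ n : ℕ, 0 < n ∧ x ^ n ∈ H}

/-- The set of non-units of `H̃`. -/
def tildeNonUnits (H : Submonoid G) : Set G := {x | x ∈ tildeH H ∧ x⁻¹ ∉ tildeH H}

/-- The seminormal closure `H'` of `H`. -/
def seminormalClosure (H : Submonoid G) : Set G :=
  {x | ∃ N : ℕ, ∀ n : ℕ, N ≤ n → x ^ n ∈ H}

/-- The conductor `(H : Ĥ)`. -/
def conductorH (H : Submonoid G) : Set G := {z | ∀ x ∈ hatH H, z * x ∈ H}

/-- `Ĥ` is a primary monoid. -/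
def HatPrimary (H : Submonoid G) : Prop :=
  (hatNonUnits H).Nonempty ∧
    ∀ a ∈ hatNonUnits H, ∀ b ∈ hatNonUnits H,
      ∃ n : ℕ, 0 < n ∧ ∃ c ∈ hatH H, b ^ n = a * c

/-- `Ĥ` is a valuation monoid. -/
def HatValuation (H : Submonoid G) : Prop :=
  ∀ a ∈ hatH H, ∀ b ∈ hatH H,
    (∃ c ∈ hatH H, b = a * c) ∨ (∃ c ∈ hatH H, a = b * c)

/-- `H` is atomic. -/
def Atomic (H : Submonoid G) : Prop :=
  ∀ a ∈ nonUnits H, ∃ s : Multiset G, (∀ v ∈ s, IsHAtom H v) ∧ a = s.prod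

/-- `H` is a discrete valuation monoid, i.e. `H_red ≅ (ℕ₀, +)`. -/
def IsDiscreteValuationMonoid (H : Submonoid G) : Prop :=
  ∃ p ∈ H, ¬ IsHUnit H p ∧ ∀ a ∈ H, ∃ n : ℕ, ∃ ε : G, IsHUnit H ε ∧ a = ε * p ^ n

end MonoidDefs

/-!
Strong primality gives, for an atom `u`, an exponent `M` with `mᴹ ⊆ uH`, and `Λ(H) < ∞` gives a
bound `λ` such that every element of `H` has a factorization with at most `λ` atoms. Hence in any
factorization of a multiple of `u`, some `M` of its atoms (or all of them) have a product `u c`;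
replacing them by `u` and a short factorization of `c` moves at most `max M (λ + 1)` atoms, so
`t(u) < ∞`.

On the other hand, a tame bound `N` for all atoms forces every atom dividing `qⁿ` (for a fixed atom `q`)
to divide a product of at most `max N 1` copies of `q`. A short factorization of `qⁿ` then shows
that `qⁿ` divides `q^(max N 1 * λ)`, which makes `q` a unit as soon as `n > max N 1 * λ`.
-/

theorem Multiset.exists_le_card_eq {α : Type*} {s : Multiset α} {n : ℕ}
    (h : n ≤ Multiset.card s) : ∃ t ≤ s, Multiset.card t = n := by
  obtain ⟨t, ht⟩ := Multiset.exists_mem_of_ne_zero (s := Multiset.powersetCard n s) <| by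
    rw [← Multiset.card_pos, Multiset.card_powersetCard]
    exact Nat.choose_pos h
  exact ⟨t, Multiset.mem_powersetCard.1 ht⟩

section StronglyPrimary

variable {G : Type*} [CommGroup G] {H : Submonoid G}

theorem isHUnit_one : IsHUnit H 1 := ⟨H.one_mem, by rw [inv_one]; exact H.one_mem⟩

theorem IsHUnit.mul {a b : G} (ha : IsHUnit H a) (hb : IsHUnit H b) : IsHUnit H (a * b) :=
  ⟨H.mul_mem ha.1 hb.1, by simpa only [mul_inv] using H.mul_mem ha.2 hb.2⟩

theorem IsHUnit.inv {a : G} (ha : IsHUnit H a) : IsHUnit H a⁻¹ :=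
  ⟨ha.2, by simpa using ha.1⟩

theorem HAssoc.refl (a : G) : HAssoc H a a := by
  simp [HAssoc, isHUnit_one]

theorem HAssoc.symm {a b : G} (h : HAssoc H a b) : HAssoc H b a := by
  simpa [HAssoc] using IsHUnit.inv h

theorem HAssoc.trans {a b c : G} (hab : HAssoc H a b) (hbc : HAssoc H b c) : HAssoc H a c := by
  simpa [HAssoc] using IsHUnit.mul hab hbc

theorem HAssoc.mul {a b c d : G} (hab : HAssoc H a b) (hcd : HAssoc H c d) :
    HAssoc H (a * c) (b * d) := by
  simpa [HAssoc, div_mul_div_comm] using IsHUnit.mul hab hcd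

theorem HAssoc.of_mul_left {a b c d : G} (h : HAssoc H (a * c) (b * d)) (hab : HAssoc H a b) :
    HAssoc H c d := by
  have : c / d = (a * c) / (b * d) * (a / b)⁻¹ := by
    rw [← div_mul_div_comm, mul_inv_cancel_comm]
  simpa [HAssoc, this] using IsHUnit.mul h (IsHUnit.inv hab)

theorem Multiset.Rel.hAssoc_prod {x x' : Multiset G} (h : Multiset.Rel (HAssoc H) x x') :
    HAssoc H x.prod x'.prod := by
  induction h with
  | zero => exact HAssoc.refl 1
  | cons hab _ ih => simpa only [Multiset.prod_cons] using hab.mul ih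

def HDvd (H : Submonoid G) (a b : G) : Prop := b / a ∈ H

theorem hDvd_iff {a b : G} : HDvd H a b ↔ ∃ c ∈ H, b = a * c :=
  ⟨fun h => ⟨b / a, h, (mul_div_cancel a b).symm⟩, fun ⟨c, hc, hb⟩ => by simpa [HDvd, hb] using hc⟩

theorem HDvd.trans {a b c : G} (hab : HDvd H a b) (hbc : HDvd H b c) : HDvd H a c := by
  simpa [HDvd] using H.mul_mem hbc hab

theorem HDvd.mul {a b c d : G} (hab : HDvd H a b) (hcd : HDvd H c d) : HDvd H (a * c) (b * d) := by
  simpa [HDvd, div_mul_div_comm] using H.mul_mem hab hcd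

theorem HAssoc.hDvd {a b : G} (h : HAssoc H a b) : HDvd H b a := h.1

theorem hDvd_pow_pow {q : G} (hq : q ∈ H) {k l : ℕ} (hkl : k ≤ l) : HDvd H (q ^ k) (q ^ l) := by
  obtain ⟨m, rfl⟩ := Nat.exists_eq_add_of_le hkl
  simpa [HDvd, pow_add] using pow_mem hq m

theorem hDvd_prod_pow {s : Multiset G} {x : G} (h : ∀ v ∈ s, HDvd H v x) :
    HDvd H s.prod (x ^ Multiset.card s) := by
  induction s using Multiset.induction_on with
  | empty => simp [HDvd, H.one_mem]
  | cons v s ih =>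
    rw [Multiset.prod_cons, Multiset.card_cons, pow_succ']
    exact (h v (Multiset.mem_cons_self v s)).mul (ih fun w hw => h w (Multiset.mem_cons_of_mem hw))

theorem IsHAtom.mem_nonUnits {u : G} (hu : IsHAtom H u) : u ∈ nonUnits H :=
  ⟨hu.1, fun h => hu.2.1 ⟨hu.1, h⟩⟩

theorem multiset_prod_mem_nonUnits_pow {s : Multiset G} (h : ∀ v ∈ s, v ∈ nonUnits H) :
    s.prod ∈ nonUnits H ^ Multiset.card s := by
  induction s using Multiset.induction_on with
  | empty => simp
  | cons v s ih =>
    rw [Multiset.prod_cons, Multiset.card_cons, pow_succ']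
    exact Set.mul_mem_mul (h v (Multiset.mem_cons_self v s))
      (ih fun w hw => h w (Multiset.mem_cons_of_mem hw))

theorem not_mem_nonUnits_pow_succ {a : G} {n : ℕ} (hn : nonUnits H ^ n ⊆ a • (H : Set G)) :
    a ∉ nonUnits H ^ (n + 1) := by
  rintro ⟨x, hx, y, hy, hxy⟩
  obtain ⟨c, hc, hac⟩ := hn hx
  simp only [smul_eq_mul] at hac hxy
  have : c * y = 1 := mul_left_cancel (a := a) (by rw [mul_one, ← mul_assoc, hac, hxy])
  exact hy.2 (eq_inv_of_mul_eq_one_left this ▸ hc)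

theorem exists_mul_eq_of_not_isHAtom {a : G} (ha : a ∈ nonUnits H) (hat : ¬ IsHAtom H a) :
    ∃ b ∈ nonUnits H, ∃ c ∈ nonUnits H, a = b * c := by
  contrapose! hat
  refine ⟨ha.1, fun hu => ha.2 hu.2, fun b c hb hc habc => ?_⟩
  by_contra! hbc
  exact hat b ⟨hb, fun h => hbc.1 ⟨hb, h⟩⟩ c ⟨hc, fun h => hbc.2 ⟨hc, h⟩⟩ habc

theorem exists_atoms_prod_eq_of_not_mem_nonUnits_pow {n : ℕ} {a : G} (ha : a ∈ nonUnits H)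
    (hn : a ∉ nonUnits H ^ (n + 1)) : ∃ s : Multiset G, (∀ v ∈ s, IsHAtom H v) ∧ a = s.prod := by
  induction n generalizing a with
  | zero => exact absurd (by simpa using ha) hn
  | succ n ih =>
    by_cases hat : IsHAtom H a
    · exact ⟨{a}, by simpa using hat, by simp⟩
    obtain ⟨b, hb, c, hc, rfl⟩ := exists_mul_eq_of_not_isHAtom ha hat
    obtain ⟨sb, hsb, rfl⟩ := ih hb fun h => hn (pow_succ (nonUnits H) (n + 1) ▸ Set.mul_mem_mul h hc)
    obtain ⟨sc, hsc, rfl⟩ := ih hc fun h =>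
      hn (pow_succ (nonUnits H) (n + 1) ▸ mul_comm c sb.prod ▸ Set.mul_mem_mul h hb)
    refine ⟨sb + sc, fun v hv => ?_, (Multiset.prod_add sb sc).symm⟩
    exact (Multiset.mem_add.1 hv).elim (hsb v) (hsc v)

theorem IsStronglyPrimary.exists_atoms_prod_eq (hsp : IsStronglyPrimary H) {a : G}
    (ha : a ∈ nonUnits H) : ∃ s : Multiset G, (∀ v ∈ s, IsHAtom H v) ∧ a = s.prod := by
  obtain ⟨n, -, hn⟩ := hsp.2 a ha
  exact exists_atoms_prod_eq_of_not_mem_nonUnits_pow ha (not_mem_nonUnits_pow_succ hn)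

theorem IsStronglyPrimary.exists_isHAtom (hsp : IsStronglyPrimary H) : ∃ q, IsHAtom H q := by
  obtain ⟨a, ha⟩ := hsp.1
  obtain ⟨s, hs, rfl⟩ := hsp.exists_atoms_prod_eq ha
  obtain ⟨q, hq⟩ := Multiset.exists_mem_of_ne_zero (s := s) fun h => ha.2 (by simp [h, H.one_mem])
  exact ⟨q, hs q hq⟩

theorem IsStronglyPrimary.lengthSet_nonempty (hsp : IsStronglyPrimary H) {a : G} (ha : a ∈ H) :
    (lengthSet H a).Nonempty := by
  by_cases hu : IsHUnit H a
  · exact ⟨0, 0, rfl, by simp, by simpa [HAssoc] using hu⟩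
  · obtain ⟨s, hs, rfl⟩ := hsp.exists_atoms_prod_eq ⟨ha, fun h => hu ⟨ha, h⟩⟩
    exact ⟨_, s, rfl, hs, HAssoc.refl _⟩

theorem IsStronglyPrimary.exists_factorization_card_le (hsp : IsStronglyPrimary H)
    (hL : Lambda H (H : Set G) < ⊤) :
    ∃ lam : ℕ, ∀ a ∈ H, ∃ s, Multiset.card s ≤ lam ∧ IsFactorization H a s := by
  refine ⟨(Lambda H H).toNat, fun a ha => ?_⟩
  have hne := hsp.lengthSet_nonempty ha
  obtain ⟨s, hcard, hs⟩ := Nat.sInf_mem hne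
  refine ⟨s, ?_, hs⟩
  have hle : ((sInf (lengthSet H a) : ℕ) : ℕ∞) ≤ Lambda H H :=
    le_iSup_of_le a (le_iSup_of_le ha (le_iSup_of_le hne le_rfl))
  simpa [hcard] using ENat.toNat_le_toNat hle hL.ne

theorem hDvd_multiset_prod {s : Multiset G} (hs : ∀ v ∈ s, v ∈ H) {v : G} (hv : v ∈ s) :
    HDvd H v s.prod := by
  classical
  exact hDvd_iff.2 ⟨(s.erase v).prod,
    H.multiset_prod_mem _ fun w hw => hs w (Multiset.mem_of_mem_erase hw),
    (Multiset.prod_erase hv).symm⟩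

theorem isFactorization_pow {q : G} (hq : IsHAtom H q) (n : ℕ) :
    IsFactorization H (q ^ n) (Multiset.replicate n q) :=
  ⟨fun v hv => Multiset.eq_of_mem_replicate hv ▸ hq, by
    rw [Multiset.prod_replicate]; exact HAssoc.refl _⟩

theorem fdist_le_of_eq_add {z z' x x' v w : Multiset G} (hz : z = x + v) (hz' : z' = x' + w)
    (hx : Multiset.Rel (HAssoc H) x x') {N : ℕ} (hv : Multiset.card v ≤ N)
    (hw : Multiset.card w ≤ N) : fdist H z z' ≤ N :=
  Nat.sInf_le ⟨x, x', v, w, hz, hz', hx, max_le hv hw⟩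

theorem exists_eq_add_of_fdist_le {z z' : Multiset G} {N : ℕ} (h : fdist H z z' ≤ N) :
    ∃ x x' v w : Multiset G, z = x + v ∧ z' = x' + w ∧ Multiset.Rel (HAssoc H) x x' ∧
      Multiset.card v ≤ N ∧ Multiset.card w ≤ N := by
  obtain ⟨x, x', v, w, hz, hz', hx, hvw⟩ := Nat.sInf_mem (s := {N : ℕ | ∃ x x' v w : Multiset G,
      z = x + v ∧ z' = x' + w ∧ Multiset.Rel (HAssoc H) x x' ∧
        max (Multiset.card v) (Multiset.card w) ≤ N})
    ⟨_, 0, 0, z, z', (zero_add z).symm, (zero_add z').symm, Multiset.Rel.zero, le_rfl⟩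
  exact ⟨x, x', v, w, hz, hz', hx, (le_max_left _ _).trans (hvw.trans h),
    (le_max_right _ _).trans (hvw.trans h)⟩

theorem exists_factorization_fdist_le_of_hDvd_prod {lam : ℕ}
    (hlam : ∀ b ∈ H, ∃ s, Multiset.card s ≤ lam ∧ IsFactorization H b s) {u a : G}
    (hu : IsHAtom H u) {z t : Multiset G} (hz : IsFactorization H a z) (ht : t ≤ z)
    (hut : HDvd H u t.prod) :
    ∃ z', IsFactorization H a z' ∧ (∃ v ∈ z', HAssoc H v u) ∧
      fdist H z z' ≤ max (Multiset.card t) (lam + 1) := by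
  obtain ⟨r, rfl⟩ := Multiset.le_iff_exists_add.1 ht
  obtain ⟨s, hs, hsf⟩ := hlam _ hut
  have hprod : HAssoc H (t + r).prod (u ::ₘ s + r).prod := by
    rw [Multiset.prod_add, Multiset.prod_add, Multiset.prod_cons]
    refine HAssoc.mul ?_ (HAssoc.refl _)
    simpa only [mul_div_cancel] using (HAssoc.refl u).mul hsf.2
  refine ⟨u ::ₘ s + r, ⟨fun v hv => ?_, hz.2.trans hprod⟩, ⟨u, by simp, HAssoc.refl u⟩,
    fdist_le_of_eq_add (add_comm t r) (add_comm _ _)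
      (Multiset.rel_refl_of_refl_on fun x _ => HAssoc.refl x) (le_max_left _ _) ?_⟩
  · rcases Multiset.mem_add.1 hv with hv | hv
    · exact (Multiset.mem_cons.1 hv).elim (· ▸ hu) (hsf.1 v)
    · exact hz.1 v (Multiset.mem_add.2 (Or.inr hv))
  · rw [Multiset.card_cons]
    exact (Nat.succ_le_succ hs).trans (le_max_right _ _)

theorem IsStronglyPrimary.locallyTame (hsp : IsStronglyPrimary H)
    (hL : Lambda H (H : Set G) < ⊤) : LocallyTame H := by
  obtain ⟨lam, hlam⟩ := hsp.exists_factorization_card_le hL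
  intro u hu
  obtain ⟨M, -, hM⟩ := hsp.2 u hu.mem_nonUnits
  refine ⟨max M (lam + 1), fun a _ hua z hz => ?_⟩
  obtain ⟨t, ht, htM, hut⟩ : ∃ t ≤ z, Multiset.card t ≤ M ∧ HDvd H u t.prod := by
    rcases le_or_gt (Multiset.card z) M with hzM | hMz
    · exact ⟨z, le_rfl, hzM, (hDvd_iff.2 hua).trans hz.2.symm.hDvd⟩
    · obtain ⟨t, ht, rfl⟩ := Multiset.exists_le_card_eq hMz.le
      obtain ⟨c, hc, hct⟩ := hM <| multiset_prod_mem_nonUnits_pow fun v hv =>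
        (hz.1 v (Multiset.mem_of_le ht hv)).mem_nonUnits
      exact ⟨t, ht, le_rfl, hDvd_iff.2 ⟨c, hc, hct.symm⟩⟩
  obtain ⟨z', hz', hu', hd⟩ := exists_factorization_fdist_le_of_hDvd_prod hlam hu hz ht hut
  exact ⟨z', hz', hu', hd.trans (max_le_max_right _ htM)⟩

theorem TameBound.exists_le_card_le_hDvd_prod {v a : G} {N : ℕ} (hN : TameBound H v N)
    (ha : a ∈ H) (hva : HDvd H v a) {z : Multiset G} (hz : IsFactorization H a z) :
    ∃ t ≤ z, Multiset.card t ≤ max N 1 ∧ HDvd H v t.prod := by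
  obtain ⟨z', hz', ⟨w, hw, hwv⟩, hd⟩ := hN a ha (hDvd_iff.1 hva) z hz
  obtain ⟨x, x', t, t', rfl, rfl, hx, ht, ht'⟩ := exists_eq_add_of_fdist_le hd
  rcases Multiset.mem_add.1 hw with hw | hw
  · obtain ⟨y, hy, hyw⟩ := Multiset.exists_mem_of_rel_of_mem (Multiset.rel_flip.2 hx) hw
    refine ⟨{y}, Multiset.singleton_le.2 (Multiset.mem_add.2 (Or.inl hy)), by simp, ?_⟩
    simpa using (HAssoc.trans hyw hwv).hDvd
  · refine ⟨t, Multiset.le_add_left t x, ht.trans (le_max_left _ _), ?_⟩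
    have htt' : HAssoc H t.prod t'.prod := by
      have := hz.2.symm.trans hz'.2
      rw [Multiset.prod_add, Multiset.prod_add] at this
      exact this.of_mul_left hx.hAssoc_prod
    exact hwv.hDvd.trans <| (hDvd_multiset_prod (fun y hy => (hz'.1 y
      (Multiset.mem_add.2 (Or.inr hy))).1) hw).trans htt'.hDvd

theorem IsStronglyPrimary.not_globallyTame (hsp : IsStronglyPrimary H)
    (hL : Lambda H (H : Set G) < ⊤) : ¬ GloballyTame H := by
  rintro ⟨N, hN⟩
  obtain ⟨lam, hlam⟩ := hsp.exists_factorization_card_le hL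
  obtain ⟨q, hq⟩ := hsp.exists_isHAtom
  set M := max N 1
  obtain ⟨s, hs, hsf⟩ := hlam (q ^ (M * lam + 1)) (pow_mem hq.1 _)
  have hdvd : ∀ v ∈ s, HDvd H v (q ^ M) := fun v hv => by
    have hvq := (hDvd_multiset_prod (fun w hw => (hsf.1 w hw).1) hv).trans hsf.2.hDvd
    obtain ⟨t, ht, htM, hvt⟩ := (hN v (hsf.1 v hv)).exists_le_card_le_hDvd_prod (pow_mem hq.1 _)
      hvq (isFactorization_pow hq _)
    obtain ⟨k, -, rfl⟩ := Multiset.le_replicate_iff.1 ht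
    rw [Multiset.card_replicate] at htM
    rw [Multiset.prod_replicate] at hvt
    exact hvt.trans (hDvd_pow_pow hq.1 htM)
  have : HDvd H (q ^ (M * lam + 1)) (q ^ (M * lam)) := by
    refine hsf.2.symm.hDvd.trans ((hDvd_prod_pow hdvd).trans ?_)
    rw [← pow_mul]
    exact hDvd_pow_pow hq.1 (Nat.mul_le_mul_left M hs)
  exact hq.mem_nonUnits.2 (by simpa [HDvd, pow_succ] using this)

end StronglyPrimary

theorem stmt5_general {G : Type*} [CommGroup G] (H : Submonoid G)
    (hsp : IsStronglyPrimary H) (hL : Lambda H (H : Set G) < ⊤) :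
    LocallyTame H ∧ ¬ GloballyTame H :=
  ⟨hsp.locallyTame hL, hsp.not_globallyTame hL⟩

/-- If `H` is a strongly primary monoid with `Λ(H) < ∞`, then `H` is
locally tame but not globally tame. -/
theorem stmt5 {G : Type*} [CommGroup G] (H : Submonoid G) (hq : IsQuotientGroup H)
    (hsp : IsStronglyPrimary H) (hL : Lambda H (H : Set G) < ⊤) :
    LocallyTame H ∧ ¬ GloballyTame H :=
  stmt5_general H hsp hL
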